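/- Suppose μ is σ-finite. Then for every finitely generated, nonzero, proper ideal 𝔫 of L^∞(X,μ), the submodule 𝔫L²(X,μ) is strictly contained in L²(X,μ), i.e., 𝔫L²(X,μ) ⊊ L²(X,μ). -/

import Mathlib

open MeasureTheory Filter Topology
open scoped ENNReal

set_option synthInstance.maxHeartbeats 1000000
set_option maxHeartbeats 1000000

noncomputable section

variable {α : Type*} [MeasurableSpace α] {ν : MeasureTheory.Measure α}

/-- The commutative ring structure on the space of (equivalence classes of) a.e.-defined
complex-valued functions, given by pointwise multiplication. -/
instance AEEqFunCommRing : CommRing (α →ₘ[ν] ℂ) where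
  __ := AEEqFun.instAddCommGroup (α := α) (μ := ν) (γ := ℂ)
  __ := AEEqFun.instCommMonoid (α := α) (μ := ν) (γ := ℂ)
  left_distrib f g h := by
    apply AEEqFun.ext
    filter_upwards [AEEqFun.coeFn_mul f (g + h), AEEqFun.coeFn_add g h,
      AEEqFun.coeFn_add (f * g) (f * h), AEEqFun.coeFn_mul f g, AEEqFun.coeFn_mul f h]
      with x h1 h2 h3 h4 h5
    simp only [Pi.mul_apply, Pi.add_apply] at h1 h2 h3 h4 h5
    simp [h1, h2, h3, h4, h5, mul_add]
  right_distrib f g h := by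
    apply AEEqFun.ext
    filter_upwards [AEEqFun.coeFn_mul (f + g) h, AEEqFun.coeFn_add f g,
      AEEqFun.coeFn_add (f * h) (g * h), AEEqFun.coeFn_mul f h, AEEqFun.coeFn_mul g h]
      with x h1 h2 h3 h4 h5
    simp only [Pi.mul_apply, Pi.add_apply] at h1 h2 h3 h4 h5
    simp [h1, h2, h3, h4, h5, add_mul]
  zero_mul f := by
    apply AEEqFun.ext
    filter_upwards [AEEqFun.coeFn_mul (0 : α →ₘ[ν] ℂ) f,
      AEEqFun.coeFn_zero (α := α) (μ := ν) (β := ℂ)] with x h1 h2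
    simp only [Pi.mul_apply, Pi.zero_apply] at h1 h2 ⊢
    simp [h1, h2]
  mul_zero f := by
    apply AEEqFun.ext
    filter_upwards [AEEqFun.coeFn_mul f (0 : α →ₘ[ν] ℂ),
      AEEqFun.coeFn_zero (α := α) (μ := ν) (β := ℂ)] with x h1 h2
    simp only [Pi.mul_apply, Pi.zero_apply] at h1 h2 ⊢
    simp [h1, h2]

instance AEEqFunAlgebra : Algebra ℂ (α →ₘ[ν] ℂ) :=
  Algebra.ofModule
    (fun c f g => by
      apply AEEqFun.ext
      filter_upwards [AEEqFun.coeFn_mul (c • f) g, AEEqFun.coeFn_smul c f,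
        AEEqFun.coeFn_smul c (f * g), AEEqFun.coeFn_mul f g] with x h1 h2 h3 h4
      simp only [Pi.mul_apply, Pi.smul_apply, smul_eq_mul] at h1 h2 h3 h4
      simp [h1, h2, h3, h4]; ring)
    (fun c f g => by
      apply AEEqFun.ext
      filter_upwards [AEEqFun.coeFn_mul f (c • g), AEEqFun.coeFn_smul c g,
        AEEqFun.coeFn_smul c (f * g), AEEqFun.coeFn_mul f g] with x h1 h2 h3 h4
      simp only [Pi.mul_apply, Pi.smul_apply, smul_eq_mul] at h1 h2 h3 h4
      simp [h1, h2, h3, h4]; ring)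

/-- `L^∞(X,μ)`: the Banach algebra of essentially bounded (equivalence classes of)
measurable functions `X → ℂ`, realised as a subalgebra of the algebra of all
a.e.-equivalence classes of functions, with pointwise operations. -/
def Linfty (ν : MeasureTheory.Measure α) : Subalgebra ℂ (α →ₘ[ν] ℂ) where
  carrier := Lp ℂ ∞ ν
  mul_mem' {f g} hf hg := by
    have hf' : MemLp f ∞ ν := Lp.mem_Lp_iff_memLp.1 hf
    have hg' : MemLp g ∞ ν := Lp.mem_Lp_iff_memLp.1 hg
    refine Lp.mem_Lp_iff_memLp.2 (MemLp.ae_eq (AEEqFun.coeFn_mul f g).symm ?_)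
    have : MemLp (⇑f • ⇑g) ∞ ν := hg'.smul hf'
    simpa [smul_eq_mul] using this
  one_mem' := by
    refine Lp.mem_Lp_iff_memLp.2
      (MemLp.ae_eq (AEEqFun.coeFn_one (α := α) (μ := ν) (β := ℂ)).symm ?_)
    exact memLp_top_const 1
  add_mem' {f g} hf hg := (Lp ℂ ∞ ν).add_mem hf hg
  zero_mem' := (Lp ℂ ∞ ν).zero_mem
  algebraMap_mem' c := by
    have h1 : (1 : α →ₘ[ν] ℂ) ∈ Lp ℂ ∞ ν := by
      refine Lp.mem_Lp_iff_memLp.2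
        (MemLp.ae_eq (AEEqFun.coeFn_one (α := α) (μ := ν) (β := ℂ)).symm ?_)
      exact memLp_top_const 1
    have heq : algebraMap ℂ (α →ₘ[ν] ℂ) c = c • (1 : α →ₘ[ν] ℂ) := by
      rw [Algebra.algebraMap_eq_smul_one]
    rw [heq]
    refine Lp.mem_Lp_iff_memLp.2 (MemLp.ae_eq (AEEqFun.coeFn_smul c (1 : α →ₘ[ν] ℂ)).symm ?_)
    exact (Lp.mem_Lp_iff_memLp.1 h1).const_smul c

lemma mem_Linfty_iff {x : α →ₘ[ν] ℂ} : x ∈ Linfty ν ↔ x ∈ Lp ℂ ∞ ν := Iff.rfl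

/-- `L²(X,μ)`: the Hilbert space of square-integrable (equivalence classes of) functions
`X → ℂ`, as a module over `L^∞(X,μ)`, the action being pointwise multiplication. -/
def L2 (ν : MeasureTheory.Measure α) : Submodule (Linfty ν) (α →ₘ[ν] ℂ) where
  carrier := Lp ℂ 2 ν
  add_mem' {f g} hf hg := (Lp ℂ 2 ν).add_mem hf hg
  zero_mem' := (Lp ℂ 2 ν).zero_mem
  smul_mem' c f hf := by
    have hc : MemLp (⇑(c : α →ₘ[ν] ℂ)) ∞ ν := Lp.mem_Lp_iff_memLp.1 c.2
    have hf' : MemLp f 2 ν := Lp.mem_Lp_iff_memLp.1 hf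
    have hsmul : c • f = (c : α →ₘ[ν] ℂ) * f := Algebra.smul_def c f
    rw [hsmul]
    refine Lp.mem_Lp_iff_memLp.2 (MemLp.ae_eq (AEEqFun.coeFn_mul _ f).symm ?_)
    have : MemLp (⇑(c : α →ₘ[ν] ℂ) • ⇑f) 2 ν := hf'.smul hc
    simpa [smul_eq_mul] using this

instance : CommRing (Linfty ν) := inferInstance
instance : Module (Linfty ν) (α →ₘ[ν] ℂ) := inferInstance
instance : AddCommGroup (L2 ν) := inferInstance
instance : Module (Linfty ν) (L2 ν) := inferInstance

/-!
Write `𝔫 = (f₁, …, fₙ)` and `w = (∑ |fᵢ|²)^{1/2} ∈ L^∞`. Since `|fᵢ| ≤ w`, each `fᵢ = w · (fᵢ / w)`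
with `fᵢ / w ∈ L^∞`, so `𝔫 ⊆ (w)`; hence `𝔫 L² = L²` makes multiplication by `w` a surjective
bounded operator on `L²`. By the open mapping theorem it has preimages of controlled norm, and
testing this on indicators of sets of finite positive measure (σ-finiteness) on which `|w|` is
small shows `|w| ≥ ε > 0` a.e. Then `w² = ∑ f̄ᵢ fᵢ ∈ 𝔫` is a unit of `L^∞`, so `𝔫 = L^∞`.
-/

namespace MeasureTheory.Lp

variable {𝕜 E : Type*} {p : ℝ≥0∞}
  [NontriviallyNormedField 𝕜] [NormedAddCommGroup E] [NormedSpace 𝕜 E]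

variable (E p) in
def smulL [Fact (1 ≤ p)] (w : Lp 𝕜 ∞ ν) : Lp E p ν →L[𝕜] Lp E p ν :=
  LinearMap.mkContinuous
    { toFun := (w • ·)
      map_add' := Lp.add_smul w
      map_smul' := fun c g => Lp.smul_comm c w g |>.symm }
    ‖w‖ (Lp.norm_smul_le w)

theorem exists_pos_le_norm_of_surjective_smul [SigmaFinite ν] [Fact (1 ≤ p)] [CompleteSpace E]
    [Nontrivial E] (w : Lp 𝕜 ∞ ν) (hw : Function.Surjective fun g : Lp E p ν => w • g) :
    ∃ ε > 0, ∀ᵐ x ∂ν, ε ≤ ‖w x‖ := by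
  obtain ⟨C, hC, hpre⟩ := (smulL E p w).exists_preimage_norm_le hw
  -- A nonzero `g` supported where `‖w‖ < ε` has a preimage `h` with `‖g‖ ≤ ε ‖h‖ ≤ ε C ‖g‖`.
  refine ⟨(2 * C)⁻¹, by positivity, ?_⟩
  by_contra hsmall
  rw [ae_iff] at hsmall
  simp only [not_le] at hsmall
  have hmeas : MeasurableSet {x | ‖w x‖ < (2 * C)⁻¹} :=
    measurableSet_lt (Lp.stronglyMeasurable w).norm.measurable measurable_const
  obtain ⟨t, ht, hts, ht0, htfin⟩ :=
    Measure.exists_subset_measure_lt_top hmeas (pos_iff_ne_zero.2 hsmall)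
  obtain ⟨e, he⟩ := exists_ne (0 : E)
  set g := indicatorConstLp p ht htfin.ne e
  obtain ⟨h, hwh, hh⟩ := hpre g
  replace hwh : w • h = g := hwh
  have hg_le : ‖g‖ ≤ (2 * C)⁻¹ * ‖h‖ := by
    refine norm_le_mul_norm_of_ae_le_mul ?_
    have hg_ae : ⇑g =ᵐ[ν] t.indicator fun _ => e := indicatorConstLp_coeFn
    filter_upwards [hg_ae, hwh ▸ coeFn_lpSMul w h] with x hgx hwhx
    by_cases hxt : x ∈ t
    · rw [hwhx, Pi.smul_apply', norm_smul]
      exact mul_le_mul_of_nonneg_right (hts hxt).le (norm_nonneg _)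
    · rw [hgx, Set.indicator_of_notMem hxt, (norm_eq_zero (E := E)).2 rfl]
      positivity
  have hg_pos : 0 < ‖g‖ := by
    rw [norm_indicatorConstLp' (zero_lt_one.trans_le Fact.out).ne' ht0.ne']
    exact mul_pos (norm_pos_iff.2 he)
      (Real.rpow_pos_of_pos (ENNReal.toReal_pos ht0.ne' htfin.ne) _)
  have hg_half : ‖g‖ ≤ ‖g‖ / 2 := calc
    ‖g‖ ≤ (2 * C)⁻¹ * ‖h‖ := hg_le
    _ ≤ (2 * C)⁻¹ * (C * ‖g‖) := by gcongr
    _ = ‖g‖ / 2 := by field_simp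
  linarith

end MeasureTheory.Lp

namespace Linfty

def toLp (f : Linfty ν) : Lp ℂ ∞ ν := ⟨f, f.2⟩

def ofMemLp {f : α → ℂ} (hf : MemLp f ∞ ν) : Linfty ν := ⟨hf.toLp f, (hf.toLp f).2⟩

theorem coeFn_ofMemLp {f : α → ℂ} (hf : MemLp f ∞ ν) :
    ⇑(ofMemLp hf : α →ₘ[ν] ℂ) =ᵐ[ν] f :=
  hf.coeFn_toLp

theorem ext_ae {f g : Linfty ν} (h : ⇑(f : α →ₘ[ν] ℂ) =ᵐ[ν] ⇑(g : α →ₘ[ν] ℂ)) : f = g :=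
  Subtype.ext (AEEqFun.ext h)

theorem coeFn_mul (f g : Linfty ν) :
    ⇑((f * g : Linfty ν) : α →ₘ[ν] ℂ) =ᵐ[ν] ⇑(f : α →ₘ[ν] ℂ) * ⇑(g : α →ₘ[ν] ℂ) :=
  AEEqFun.coeFn_mul _ _

theorem coeFn_sum {ι : Type*} (s : Finset ι) (f : ι → Linfty ν) :
    ⇑((∑ i ∈ s, f i : Linfty ν) : α →ₘ[ν] ℂ) =ᵐ[ν] ∑ i ∈ s, ⇑(f i : α →ₘ[ν] ℂ) := by
  rw [AddSubmonoidClass.coe_finsetSum]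
  exact AEEqFun.coeFn_finsetSum s _

def conj (f : Linfty ν) : Linfty ν := ofMemLp (Lp.memLp (toLp f)).star

theorem isUnit_of_ae_le_norm {w : Linfty ν} {ε : ℝ} (hε : 0 < ε)
    (hw : ∀ᵐ x ∂ν, ε ≤ ‖(w : α →ₘ[ν] ℂ) x‖) : IsUnit w := by
  have hinv : MemLp (fun x => ((w : α →ₘ[ν] ℂ) x)⁻¹) ∞ ν := by
    refine memLp_top_of_bound
      (AEEqFun.stronglyMeasurable _).aemeasurable.inv.aestronglyMeasurable ε⁻¹ ?_
    filter_upwards [hw] with x hx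
    rw [norm_inv]
    exact inv_anti₀ hε hx
  refine IsUnit.of_mul_eq_one (ofMemLp hinv) (ext_ae ?_)
  filter_upwards [coeFn_mul w (ofMemLp hinv), coeFn_ofMemLp hinv,
    (AEEqFun.coeFn_one : ⇑(1 : α →ₘ[ν] ℂ) =ᵐ[ν] 1), hw] with x hmul hv hone hx
  have hx0 : (w : α →ₘ[ν] ℂ) x ≠ 0 := norm_pos_iff.1 (hε.trans_le hx)
  rw [hmul, OneMemClass.coe_one, hone, Pi.mul_apply, hv, mul_inv_cancel₀ hx0, Pi.one_apply]

theorem dvd_of_ae_norm_le {f w : Linfty ν}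
    (h : ∀ᵐ x ∂ν, ‖(f : α →ₘ[ν] ℂ) x‖ ≤ ‖(w : α →ₘ[ν] ℂ) x‖) : w ∣ f := by
  have hquot : MemLp (fun x => (f : α →ₘ[ν] ℂ) x / (w : α →ₘ[ν] ℂ) x) ∞ ν := by
    refine memLp_top_of_bound ((AEEqFun.stronglyMeasurable _).aemeasurable.div
      (AEEqFun.stronglyMeasurable _).aemeasurable).aestronglyMeasurable 1 ?_
    filter_upwards [h] with x hx
    rw [norm_div]
    exact div_le_one_of_le₀ hx (norm_nonneg _)
  refine ⟨ofMemLp hquot, ext_ae ?_⟩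
  filter_upwards [coeFn_mul w (ofMemLp hquot), coeFn_ofMemLp hquot, h] with x hmul hq hx
  rw [hmul, Pi.mul_apply, hq]
  by_cases hw0 : (w : α →ₘ[ν] ℂ) x = 0
  · rw [hw0, norm_zero, norm_le_zero_iff] at hx
    simp [hx, hw0]
  · exact (mul_div_cancel₀ _ hw0).symm

theorem memLp_sqrt_sum_norm_sq (S : Finset (Linfty ν)) :
    MemLp (fun x => ((√(∑ f ∈ S, ‖(f : α →ₘ[ν] ℂ) x‖ ^ 2) : ℝ) : ℂ)) ∞ ν := by
  refine MemLp.of_le (g := fun x => ∑ f ∈ S, ‖(f : α →ₘ[ν] ℂ) x‖)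
    (memLp_finsetSum S fun f _ => (Lp.memLp (toLp f)).norm) ?_ (.of_forall fun x => ?_)
  · fun_prop
  · have hnonneg : ∀ f ∈ S, 0 ≤ ‖(f : α →ₘ[ν] ℂ) x‖ := fun f _ => norm_nonneg _
    rw [Complex.norm_real, Real.norm_of_nonneg (Real.sqrt_nonneg _),
      Real.norm_of_nonneg (Finset.sum_nonneg hnonneg),
      Real.sqrt_le_left (Finset.sum_nonneg hnonneg)]
    exact Finset.sum_sq_le_sq_sum_of_nonneg hnonneg

def sqrtSumNormSq (S : Finset (Linfty ν)) : Linfty ν := ofMemLp (memLp_sqrt_sum_norm_sq S)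

theorem span_le_span_sqrtSumNormSq (S : Finset (Linfty ν)) :
    Ideal.span (S : Set (Linfty ν)) ≤ Ideal.span {sqrtSumNormSq S} := by
  refine Ideal.span_le.2 fun f hf => Ideal.mem_span_singleton.2 (dvd_of_ae_norm_le ?_)
  filter_upwards [coeFn_ofMemLp (memLp_sqrt_sum_norm_sq S)] with x hx
  rw [sqrtSumNormSq, hx, Complex.norm_real, Real.norm_of_nonneg (Real.sqrt_nonneg _),
    Real.le_sqrt (norm_nonneg _) (Finset.sum_nonneg fun _ _ => sq_nonneg _)]
  exact Finset.single_le_sum (f := fun f : Linfty ν => ‖(f : α →ₘ[ν] ℂ) x‖ ^ 2)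
    (fun _ _ => sq_nonneg _) hf

theorem sqrtSumNormSq_mul_self (S : Finset (Linfty ν)) :
    sqrtSumNormSq S * sqrtSumNormSq S = ∑ f ∈ S, conj f * f := by
  refine ext_ae ?_
  have hconj : ∀ᵐ x ∂ν, ∀ f ∈ S, ((conj f * f : Linfty ν) : α →ₘ[ν] ℂ) x =
      (‖(f : α →ₘ[ν] ℂ) x‖ ^ 2 : ℝ) := by
    rw [eventually_all_finset]
    intro f _
    filter_upwards [coeFn_mul (conj f) f, coeFn_ofMemLp (Lp.memLp (toLp f)).star] with x hmul hc
    rw [hmul, Pi.mul_apply, conj, hc]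
    push_cast
    exact Complex.conj_mul' _
  filter_upwards [coeFn_mul (sqrtSumNormSq S) (sqrtSumNormSq S),
    coeFn_ofMemLp (memLp_sqrt_sum_norm_sq S), coeFn_sum S (fun f => conj f * f), hconj]
    with x hmul hW hsum hconj
  rw [hmul, hsum, Pi.mul_apply, sqrtSumNormSq, hW, Finset.sum_apply, Finset.sum_congr rfl hconj,
    ← Complex.ofReal_mul, Real.mul_self_sqrt (Finset.sum_nonneg fun _ _ => sq_nonneg _)]
  push_cast
  rfl

end Linfty

namespace L2

def toLp (g : L2 ν) : Lp ℂ 2 ν := ⟨g, g.2⟩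

theorem toLp_smul (c : Linfty ν) (g : L2 ν) : toLp (c • g) = Linfty.toLp c • toLp g := by
  apply Lp.ext
  exact (AEEqFun.coeFn_mul _ _).trans (Lp.coeFn_lpSMul (Linfty.toLp c) (toLp g)).symm

end L2

theorem Linfty.exists_pos_le_norm_of_span_singleton_smul_top_eq_top [SigmaFinite ν]
    (w : Linfty ν) (hw : Ideal.span {w} • (⊤ : Submodule (Linfty ν) (L2 ν)) = ⊤) :
    ∃ ε > 0, ∀ᵐ x ∂ν, ε ≤ ‖(w : α →ₘ[ν] ℂ) x‖ := by
  refine Lp.exists_pos_le_norm_of_surjective_smul (E := ℂ) (p := 2) (Linfty.toLp w) fun g => ?_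
  have hg : (⟨g, g.2⟩ : L2 ν) ∈ Ideal.span {w} • (⊤ : Submodule (Linfty ν) (L2 ν)) := by
    rw [hw]; trivial
  rw [Submodule.ideal_span_singleton_smul, Submodule.mem_smul_pointwise_iff_exists] at hg
  obtain ⟨h, -, hwh⟩ := hg
  refine ⟨L2.toLp h, ?_⟩
  change Linfty.toLp w • L2.toLp h = g
  rw [← L2.toLp_smul, hwh]
  rfl

theorem smul_top_lt_top_of_fg_ne_bot_ne_top_general
    {X : Type*} [MeasurableSpace X]
    (μ : MeasureTheory.Measure X) [SigmaFinite μ]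
    (𝔫 : Ideal (Linfty μ)) (hfg : 𝔫.FG) (hproper : 𝔫 ≠ ⊤) :
    𝔫 • (⊤ : Submodule (Linfty μ) (L2 μ)) < ⊤ := by
  obtain ⟨S, rfl⟩ := hfg
  refine lt_top_iff_ne_top.2 fun htop => hproper ?_
  have hle := Submodule.smul_mono_left (N := (⊤ : Submodule (Linfty μ) (L2 μ)))
    (Linfty.span_le_span_sqrtSumNormSq S)
  rw [htop] at hle
  obtain ⟨ε, hε, hw⟩ :=
    Linfty.exists_pos_le_norm_of_span_singleton_smul_top_eq_top _ (top_unique hle)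
  have hunit := Linfty.isUnit_of_ae_le_norm hε hw
  refine Ideal.eq_top_of_isUnit_mem _ ?_ (hunit.mul hunit)
  rw [Linfty.sqrtSumNormSq_mul_self]
  exact Ideal.sum_mem _ fun f hf => Ideal.mul_mem_left _ _ (Ideal.subset_span hf)

/-- If `μ` is σ-finite, then for every finitely generated, nonzero, proper
ideal `𝔫` of `L^∞(X,μ)`, one has `𝔫·L²(X,μ) ⊊ L²(X,μ)`. -/
theorem smul_top_lt_top_of_fg_ne_bot_ne_top
    {X : Type*} [TopologicalSpace X] [T2Space X] [LocallyCompactSpace X]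
    [MeasurableSpace X] [BorelSpace X]
    (μ : MeasureTheory.Measure X) [μ.Regular] [SigmaFinite μ]
    (𝔫 : Ideal (Linfty μ)) (hfg : 𝔫.FG) (hne : 𝔫 ≠ ⊥) (hproper : 𝔫 ≠ ⊤) :
    𝔫 • (⊤ : Submodule (Linfty μ) (L2 μ)) < ⊤ :=
  smul_top_lt_top_of_fg_ne_bot_ne_top_general μ 𝔫 hfg hproper
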